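/- The dual norm of the OWL norm Ω_w satisfies Ω_w*(x) = max over i = 1,...,n of τ_i ‖x_(i)‖_1, where τ_i = (Σ_{j=1}^i w_j)^{-1} and ‖x_(i)‖_1 = Σ_{j=1}^i |x|_[j] is the sum of the i largest magnitudes of x. -/

import Mathlib

open Finset

/-- The vector of absolute values of x, sorted in non-increasing order. -/
noncomputable def absSorted {n : ℕ} (x : Fin n → ℝ) : Fin n → ℝ :=
  fun i => |x (Tuple.sort (fun j => -|x j|) i)|

/-- The ordered weighted l1 norm Omega_w(x). -/
noncomputable def owl {n : ℕ} (w x : Fin n → ℝ) : ℝ := ∑ i, w i * absSorted x i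

/-- tau_i = (w_1 + ... + w_i)⁻¹ (0-indexed: sum over j ≤ i). -/
noncomputable def tau {n : ℕ} (w : Fin n → ℝ) (i : Fin n) : ℝ :=
  (∑ j ∈ Finset.Iic i, w j)⁻¹

/-- The atom b⁽ⁱ⁾: first i+1 entries equal to tau_i, remaining entries zero. -/
noncomputable def atomVec {n : ℕ} (w : Fin n → ℝ) (i : Fin n) : Fin n → ℝ :=
  fun j => if j ≤ i then tau w i else 0

/-- The atomic set A: all signed permutations of the atoms b⁽¹⁾, ..., b⁽ⁿ⁾. -/
noncomputable def atomSet {n : ℕ} (w : Fin n → ℝ) : Set (Fin n → ℝ) :=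
  { a | ∃ (σ : Equiv.Perm (Fin n)) (s : Fin n → ℝ) (i : Fin n),
      (∀ j, s j = 1 ∨ s j = -1) ∧ a = fun j => s j * atomVec w i (σ j) }

/-! By the rearrangement inequality, `∑ uᵢ xᵢ ≤ ∑ |u|_[i] |x|_[i]`. If `M` is the claimed
maximum, the partial sums of `|x|_[·]` are at most `M` times those of `w`, and Abel summation
against the decreasing weights `|u|_[·]` gives `∑ |u|_[i] |x|_[i] ≤ M Ω_w(u) ≤ M`. The bound is
attained at the atom `b⁽ⁱ⁾` of a maximizing index `i`, laid out along the decreasing order of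
`|x|` and signed like `x`. -/

section Sorting

variable {n : ℕ}

theorem absSorted_nonneg (x : Fin n → ℝ) (i : Fin n) : 0 ≤ absSorted x i :=
  abs_nonneg _

theorem absSorted_antitone (x : Fin n → ℝ) : Antitone (absSorted x) := fun _ _ hij =>
  neg_le_neg_iff.mp (Tuple.monotone_sort (fun j => -|x j|) hij)

theorem absSorted_eq_of_antitone {u : Fin n → ℝ} {σ : Equiv.Perm (Fin n)}
    (h : Antitone fun i => |u (σ i)|) : absSorted u = fun i => |u (σ i)| := by
  have := Tuple.unique_monotone (f := fun j => -|u j|) (Tuple.monotone_sort _)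
    (fun _ _ hij => neg_le_neg (h hij))
  funext i
  exact neg_inj.mp (congrFun this i)

theorem sum_mul_le_sum_absSorted_mul (u x : Fin n → ℝ) :
    ∑ i, u i * x i ≤ ∑ i, absSorted u i * absSorted x i := by
  set σu := Tuple.sort fun j => -|u j|
  set σx := Tuple.sort fun j => -|x j|
  calc ∑ i, u i * x i ≤ ∑ i, |u i| * |x i| :=
        sum_le_sum fun i _ => abs_mul (u i) (x i) ▸ le_abs_self _
    _ = ∑ i, absSorted u i * absSorted x ((σu.trans σx.symm) i) := by
        rw [← Equiv.sum_comp σu]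
        simp [absSorted, σu, σx]
    _ ≤ _ := ((absSorted_antitone u).monovary (absSorted_antitone x)).sum_mul_comp_perm_le_sum_mul

end Sorting

theorem sum_mul_le_sum_mul_of_sum_Iic_le {n : ℕ} {a b c : Fin n → ℝ} (ha : Antitone a)
    (ha0 : ∀ i, 0 ≤ a i) (hbc : ∀ k, ∑ j ∈ Iic k, b j ≤ ∑ j ∈ Iic k, c j) :
    ∑ i, a i * b i ≤ ∑ i, a i * c i := by
  induction n with
  | zero => simp
  | succ n ih =>
    -- peel off `a (last n)`; the weights `a i - a (last n)` are again antitone and nonnegative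
    have peel (f : Fin (n + 1) → ℝ) : ∑ i, a i * f i =
        ∑ i : Fin n, (a i.castSucc - a (Fin.last n)) * f i.castSucc +
          a (Fin.last n) * ∑ i, f i := by
      rw [Fin.sum_univ_castSucc, Fin.sum_univ_castSucc f, mul_add, mul_sum]
      simp only [sub_mul, sum_sub_distrib]
      ring
    rw [peel b, peel c]
    gcongr ?_ + ?_
    · refine ih (fun i j hij => sub_le_sub_right (ha (Fin.castSucc_le_castSucc_iff.2 hij)) _)
        (fun i => sub_nonneg.2 (ha (Fin.le_last _))) (fun k => ?_)
      simpa [Fin.sum_Iic_castSucc] using hbc k.castSucc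
    · have := hbc (Fin.last n)
      rw [← Fin.top_eq_last, Iic_top] at this
      exact mul_le_mul_of_nonneg_left this (ha0 _)

section UpperBound

variable {n : ℕ} {w : Fin n → ℝ}

theorem sum_Iic_pos (hmono : Antitone w) (hnonneg : ∀ i, 0 ≤ w i) (hne : w ≠ 0) (i : Fin n) :
    0 < ∑ j ∈ Iic i, w j := by
  obtain ⟨k, hk⟩ := Function.ne_iff.1 hne
  have hfirst : (⟨0, i.pos⟩ : Fin n) ∈ Iic i :=
    mem_Iic.2 (Fin.le_iff_val_le_val.2 (Nat.zero_le _))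
  calc 0 < w k := (hnonneg k).lt_of_ne' hk
    _ ≤ w ⟨0, i.pos⟩ := hmono (Fin.le_iff_val_le_val.2 (Nat.zero_le _))
    _ ≤ ∑ j ∈ Iic i, w j := single_le_sum (fun j _ => hnonneg j) hfirst

theorem sum_mul_le_of_owl_le_one (hW : ∀ i, 0 < ∑ j ∈ Iic i, w j) {u : Fin n → ℝ}
    (hu : owl w u ≤ 1) (x : Fin n → ℝ) (hn : (univ : Finset (Fin n)).Nonempty) :
    ∑ i, u i * x i ≤ univ.sup' hn fun i => tau w i * ∑ j ∈ Iic i, absSorted x j := by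
  obtain ⟨i₀, -⟩ := id hn
  set M := univ.sup' hn fun i => tau w i * ∑ j ∈ Iic i, absSorted x j
  have hle (k : Fin n) : tau w k * ∑ j ∈ Iic k, absSorted x j ≤ M :=
    le_sup' (fun i => tau w i * ∑ j ∈ Iic i, absSorted x j) (mem_univ k)
  have hM : 0 ≤ M := (mul_nonneg (inv_nonneg.2 (hW i₀).le)
    (sum_nonneg fun j _ => absSorted_nonneg x j)).trans (hle i₀)
  have hpartial (k : Fin n) : ∑ j ∈ Iic k, absSorted x j ≤ ∑ j ∈ Iic k, M * w j := by
    rw [← mul_sum, mul_comm, ← inv_mul_le_iff₀ (hW k)]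
    exact hle k
  calc ∑ i, u i * x i ≤ ∑ i, absSorted u i * absSorted x i := sum_mul_le_sum_absSorted_mul u x
    _ ≤ ∑ i, absSorted u i * (M * w i) :=
        sum_mul_le_sum_mul_of_sum_Iic_le (absSorted_antitone u) (absSorted_nonneg u) hpartial
    _ = M * owl w u := by
        simp only [owl, mul_sum]
        exact sum_congr rfl fun i _ => by ring
    _ ≤ M := mul_le_of_le_one_right hM hu

end UpperBound

section Attainment

variable {n : ℕ} {w : Fin n → ℝ}

theorem sum_atomVec_mul (c : Fin n → ℝ) (i : Fin n) :
    ∑ k, atomVec w i k * c k = tau w i * ∑ k ∈ Iic i, c k := by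
  simp [atomVec, ite_mul, sum_ite, mul_sum, filter_ge_eq_Iic]

theorem atomVec_nonneg {i : Fin n} (hτ : 0 ≤ tau w i) (j : Fin n) : 0 ≤ atomVec w i j := by
  unfold atomVec
  split_ifs <;> simp [hτ]

theorem atomVec_antitone {i : Fin n} (hτ : 0 ≤ tau w i) : Antitone (atomVec w i) := by
  intro j k hjk
  unfold atomVec
  split_ifs <;> first | rfl | exact hτ | exact absurd (hjk.trans ‹_›) ‹_›

noncomputable def alignedAtom (w x : Fin n → ℝ) (i : Fin n) : Fin n → ℝ :=
  fun j => (if x j < 0 then -1 else 1) * atomVec w i ((Tuple.sort fun j => -|x j|).symm j)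

theorem abs_alignedAtom {i : Fin n} (hτ : 0 ≤ tau w i) (x : Fin n → ℝ) (j : Fin n) :
    |alignedAtom w x i j| = atomVec w i ((Tuple.sort fun j => -|x j|).symm j) := by
  rw [alignedAtom, abs_mul, abs_of_nonneg (atomVec_nonneg hτ _)]
  split_ifs <;> simp

theorem absSorted_alignedAtom {i : Fin n} (hτ : 0 ≤ tau w i) (x : Fin n → ℝ) :
    absSorted (alignedAtom w x i) = atomVec w i := by
  rw [absSorted_eq_of_antitone (σ := Tuple.sort fun j => -|x j|)] <;>
    simp only [abs_alignedAtom hτ, Equiv.symm_apply_apply]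
  exact atomVec_antitone hτ

theorem owl_alignedAtom {i : Fin n} (hW : 0 < ∑ j ∈ Iic i, w j) (x : Fin n → ℝ) :
    owl w (alignedAtom w x i) = 1 := by
  have hτ : 0 ≤ tau w i := inv_nonneg.2 hW.le
  simp only [owl, absSorted_alignedAtom hτ, mul_comm (w _), sum_atomVec_mul]
  exact inv_mul_cancel₀ hW.ne'

theorem sum_alignedAtom_mul (i : Fin n) (x : Fin n → ℝ) :
    ∑ j, alignedAtom w x i j * x j = tau w i * ∑ j ∈ Iic i, absSorted x j := by
  have hsign (j : Fin n) : alignedAtom w x i j * x j =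
      atomVec w i ((Tuple.sort fun j => -|x j|).symm j) * |x j| := by
    unfold alignedAtom
    split_ifs with hx
    · rw [abs_of_neg hx]; ring
    · rw [abs_of_nonneg (not_lt.1 hx)]; ring
  simp only [hsign]
  rw [← Equiv.sum_comp (Tuple.sort fun j => -|x j|)]
  simp only [Equiv.symm_apply_apply]
  exact sum_atomVec_mul (absSorted x) i

end Attainment

/-- The dual norm of the OWL norm: Omega_w*(x) = max_i tau_i * (sum of the i largest
magnitudes of x). -/
theorem owl_dual_norm {n : ℕ} (hn : 0 < n) (w : Fin n → ℝ) (hmono : Antitone w)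
    (hnonneg : ∀ i, 0 ≤ w i) (hne : w ≠ 0) (x : Fin n → ℝ) :
    sSup {y : ℝ | ∃ u : Fin n → ℝ, owl w u ≤ 1 ∧ y = ∑ i, u i * x i} =
      univ.sup' ⟨⟨0, hn⟩, mem_univ _⟩
        (fun i : Fin n => tau w i * ∑ j ∈ Finset.Iic i, absSorted x j) := by
  have hW := sum_Iic_pos hmono hnonneg hne
  obtain ⟨i, -, hi⟩ := exists_mem_eq_sup' ⟨⟨0, hn⟩, mem_univ _⟩
    fun i : Fin n => tau w i * ∑ j ∈ Iic i, absSorted x j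
  refine IsGreatest.csSup_eq ⟨⟨alignedAtom w x i, (owl_alignedAtom (hW i) x).le, ?_⟩, ?_⟩
  · rw [hi, sum_alignedAtom_mul]
  · rintro y ⟨u, hu, rfl⟩
    exact sum_mul_le_of_owl_le_one hW hu x _
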